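/- Let P and Q be two polygonal paths (polylines) in the plane, each given by a finite list of vertices with consecutive vertices joined by straight segments, and parameterized continuously. Suppose P and Q intersect in exactly t points i₁, …, i_t, and both P and Q visit these points in this order along their parameterizations. Then the total number of bend vertices of P and Q lying strictly between i₁ and i_t (along their respective parameterizations) is at least t − 1. -/
import Mathlib


lemma seg_affine (m : ℕ) (v : Fin (m + 1) → EuclideanSpace ℝ (Fin 2))
    (f : ℝ → EuclideanSpace ℝ (Fin 2))
    (hf : ∀ (j : Fin m), ∀ s ∈ Set.Icc (0 : ℝ) 1,
      f ((j : ℝ) + s) = (1 - s) • v j.castSucc + s • v j.succ)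
    (x y : ℝ) (hx : 0 ≤ x) (hxy : x < y) (hy : y ≤ m)
    (hno : ∀ k : ℕ, ¬ (x < (k : ℝ) ∧ (k : ℝ) < y)) :
    ∀ s ∈ Set.Icc (0 : ℝ) 1, ∃ c ∈ Set.Icc (0 : ℝ) (m : ℝ),
      f c = (1 - s) • f x + s • f y := by
  intro s hs
  obtain ⟨hs0, hs1⟩ := hs
  have hxm : x < m := lt_of_lt_of_le hxy hy
  set j := ⌊x⌋₊ with hj
  have hjx : (j : ℝ) ≤ x := Nat.floor_le hx
  have hxj1 : x < (j : ℝ) + 1 := Nat.lt_floor_add_one x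
  have hjm : j < m := by exact_mod_cast lt_of_le_of_lt hjx hxm
  have hy1 : y ≤ (j : ℝ) + 1 := by
    by_contra h
    exact hno (j + 1) ⟨by push_cast; linarith, by push_cast; linarith⟩
  set jf : Fin m := ⟨j, hjm⟩ with hjf
  have hfx : f x = (1 - (x - j)) • v jf.castSucc + (x - j) • v jf.succ := by
    have h := hf jf (x - j) ⟨by linarith, by linarith⟩
    rw [show ((jf : ℕ) : ℝ) + (x - j) = x by push_cast; ring] at h
    exact h
  have hfy : f y = (1 - (y - j)) • v jf.castSucc + (y - j) • v jf.succ := by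
    have h := hf jf (y - j) ⟨by linarith, by linarith⟩
    rw [show ((jf : ℕ) : ℝ) + (y - j) = y by push_cast; ring] at h
    exact h
  refine ⟨(1 - s) * x + s * y, ⟨by nlinarith, by nlinarith⟩, ?_⟩
  have hfc : f ((1 - s) * x + s * y)
      = (1 - ((1 - s) * x + s * y - j)) • v jf.castSucc
        + ((1 - s) * x + s * y - j) • v jf.succ := by
    have h := hf jf ((1 - s) * x + s * y - j) ⟨by nlinarith, by nlinarith⟩
    rw [show ((jf : ℕ) : ℝ) + ((1 - s) * x + s * y - j) = (1 - s) * x + s * y by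
      push_cast; ring] at h
    exact h
  rw [hfc, hfx, hfy]
  module


/-- Between any two consecutive common points of two polylines, at least one of them
must bend: if `P` and `Q` intersect in exactly `t` points, visited in the same order
along both parameterizations, then the total number of bend vertices strictly between
the first and last intersection (along the respective parameterizations) is at least
`t - 1`. A polyline with vertices `v 0, …, v m` is parameterized on `[0, m]`, with
`f (j + s) = (1 - s) • v j + s • v (j+1)` for `s ∈ [0,1]`; its bends are the interior
vertices `v j` for `0 < j < m`, occurring at parameter `j`. -/
theorem stmt_1
    (m n t : ℕ) (ht : 0 < t)
    (v : Fin (m + 1) → EuclideanSpace ℝ (Fin 2))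
    (w : Fin (n + 1) → EuclideanSpace ℝ (Fin 2))
    (f g : ℝ → EuclideanSpace ℝ (Fin 2))
    (hf : ∀ (j : Fin m), ∀ s ∈ Set.Icc (0 : ℝ) 1,
      f ((j : ℝ) + s) = (1 - s) • v j.castSucc + s • v j.succ)
    (hg : ∀ (j : Fin n), ∀ s ∈ Set.Icc (0 : ℝ) 1,
      g ((j : ℝ) + s) = (1 - s) • w j.castSucc + s • w j.succ)
    (pts : Fin t → EuclideanSpace ℝ (Fin 2))
    (hpts : Function.Injective pts)
    (a b : Fin t → ℝ)
    (ha : StrictMono a) (hb : StrictMono b)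
    (haI : ∀ i, a i ∈ Set.Icc (0 : ℝ) (m : ℝ))
    (hbI : ∀ i, b i ∈ Set.Icc (0 : ℝ) (n : ℝ))
    (hfa : ∀ i, f (a i) = pts i) (hgb : ∀ i, g (b i) = pts i)
    (hexact : {x | ∃ s ∈ Set.Icc (0 : ℝ) (m : ℝ), f s = x} ∩
        {x | ∃ u ∈ Set.Icc (0 : ℝ) (n : ℝ), g u = x} = Set.range pts) :
    t - 1 ≤
      (Finset.univ.filter (fun j : Fin (m + 1) =>
        0 < (j : ℕ) ∧ (j : ℕ) < m ∧
          a ⟨0, ht⟩ < (j : ℝ) ∧ (j : ℝ) < a ⟨t - 1, Nat.sub_lt ht one_pos⟩)).card +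
      (Finset.univ.filter (fun j : Fin (n + 1) =>
        0 < (j : ℕ) ∧ (j : ℕ) < n ∧
          b ⟨0, ht⟩ < (j : ℝ) ∧ (j : ℝ) < b ⟨t - 1, Nat.sub_lt ht one_pos⟩)).card := by
  -- index embeddings
  have hlt1 : ∀ i : Fin (t - 1), (i : ℕ) < t := fun i => by omega
  have hlt2 : ∀ i : Fin (t - 1), (i : ℕ) + 1 < t := fun i => by
    have := i.isLt; omega
  set ii : Fin (t - 1) → Fin t := fun i => ⟨i, hlt1 i⟩ with hii
  set si : Fin (t - 1) → Fin t := fun i => ⟨(i : ℕ) + 1, hlt2 i⟩ with hsi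
  -- each gap contains a bend of P or Q
  have key : ∀ i : Fin (t - 1),
      (∃ k : ℕ, a (ii i) < (k : ℝ) ∧ (k : ℝ) < a (si i)) ∨
      (∃ k : ℕ, b (ii i) < (k : ℝ) ∧ (k : ℝ) < b (si i)) := by
    intro i
    by_contra h
    push_neg at h
    obtain ⟨hA, hB⟩ := h
    have hiisi : ii i < si i := by simp [hii, hsi, Fin.lt_def]
    have haa : a (ii i) < a (si i) := ha hiisi
    have hbb : b (ii i) < b (si i) := hb hiisi
    have hAseg := seg_affine m v f hf (a (ii i)) (a (si i)) (haI (ii i)).1 haa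
      (haI (si i)).2 (fun k hk => absurd hk.2 (not_lt.2 (hA k hk.1)))
    have hBseg := seg_affine n w g hg (b (ii i)) (b (si i)) (hbI (ii i)).1 hbb
      (hbI (si i)).2 (fun k hk => absurd hk.2 (not_lt.2 (hB k hk.1)))
    -- the whole segment between pts (ii i) and pts (si i) is in the intersection
    have hsub : (fun s : ℝ => (1 - s) • pts (ii i) + s • pts (si i)) '' Set.Icc 0 1
        ⊆ Set.range pts := by
      rw [← hexact]
      rintro x ⟨s, hs, rfl⟩
      constructor
      · obtain ⟨c, hc, hfc⟩ := hAseg s hs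
        exact ⟨c, hc, by rw [hfc, hfa, hfa]⟩
      · obtain ⟨c, hc, hgc⟩ := hBseg s hs
        exact ⟨c, hc, by rw [hgc, hgb, hgb]⟩
    have hne : pts (si i) - pts (ii i) ≠ 0 := by
      intro h
      have : pts (si i) = pts (ii i) := by
        have := sub_eq_zero.mp h; exact this
      exact absurd (hpts this) (by simp [hii, hsi, Fin.ext_iff])
    have hinj : Set.InjOn (fun s : ℝ => (1 - s) • pts (ii i) + s • pts (si i))
        (Set.Icc 0 1) := by
      intro s1 _ s2 _ h
      have h2 : (s1 - s2) • (pts (si i) - pts (ii i)) = 0 := by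
        have : (1 - s1) • pts (ii i) + s1 • pts (si i)
            = (1 - s2) • pts (ii i) + s2 • pts (si i) := h
        have e : (s1 - s2) • (pts (si i) - pts (ii i))
            = ((1 - s1) • pts (ii i) + s1 • pts (si i))
              - ((1 - s2) • pts (ii i) + s2 • pts (si i)) := by module
        rw [e, this, sub_self]
      rcases smul_eq_zero.mp h2 with h3 | h3
      · linarith [sub_eq_zero.mp h3]
      · exact absurd h3 hne
    have hInf : ((fun s : ℝ => (1 - s) • pts (ii i) + s • pts (si i)) ''
        Set.Icc 0 1).Infinite :=
      (Set.Icc_infinite (by norm_num)).image hinj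
    exact hInf (Set.Finite.subset (Set.finite_range pts) hsub)
  -- choose bends
  classical
  set FP : Finset (Fin (m + 1)) := Finset.univ.filter (fun j : Fin (m + 1) =>
        0 < (j : ℕ) ∧ (j : ℕ) < m ∧
          a ⟨0, ht⟩ < (j : ℝ) ∧ (j : ℝ) < a ⟨t - 1, Nat.sub_lt ht one_pos⟩) with hFP
  set FQ : Finset (Fin (n + 1)) := Finset.univ.filter (fun j : Fin (n + 1) =>
        0 < (j : ℕ) ∧ (j : ℕ) < n ∧
          b ⟨0, ht⟩ < (j : ℝ) ∧ (j : ℝ) < b ⟨t - 1, Nat.sub_lt ht one_pos⟩) with hFQ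
  -- bounds helpers
  have hmono0a : ∀ i : Fin (t - 1), a ⟨0, ht⟩ ≤ a (ii i) :=
    fun i => ha.monotone (by simp [hii, Fin.le_def])
  have hmono1a : ∀ i : Fin (t - 1), a (si i) ≤ a ⟨t - 1, Nat.sub_lt ht one_pos⟩ :=
    fun i => ha.monotone (by simp [hsi, Fin.le_def])
  have hmono0b : ∀ i : Fin (t - 1), b ⟨0, ht⟩ ≤ b (ii i) :=
    fun i => hb.monotone (by simp [hii, Fin.le_def])
  have hmono1b : ∀ i : Fin (t - 1), b (si i) ≤ b ⟨t - 1, Nat.sub_lt ht one_pos⟩ :=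
    fun i => hb.monotone (by simp [hsi, Fin.le_def])
  -- build the map into the disjoint sum
  have key2 : ∀ i : Fin (t - 1), ∃ e : Fin (m + 1) ⊕ Fin (n + 1),
      e ∈ FP.disjSum FQ ∧
      Sum.elim (fun j : Fin (m + 1) => a (ii i) < (j : ℝ) ∧ (j : ℝ) < a (si i))
        (fun j : Fin (n + 1) => b (ii i) < (j : ℝ) ∧ (j : ℝ) < b (si i)) e := by
    intro i
    rcases key i with ⟨k, hk1, hk2⟩ | ⟨k, hk1, hk2⟩
    · have hkm : (k : ℝ) < m := lt_of_lt_of_le hk2 (haI (si i)).2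
      have hkm' : k < m := by exact_mod_cast hkm
      have hk0 : (0 : ℝ) < k := lt_of_le_of_lt (haI (ii i)).1 hk1
      have hk0' : 0 < k := by exact_mod_cast hk0
      refine ⟨Sum.inl ⟨k, by omega⟩, ?_, hk1, hk2⟩
      apply Finset.inl_mem_disjSum.mpr
      rw [hFP]
      simp only [Finset.mem_filter, Finset.mem_univ, true_and]
      exact ⟨hk0', hkm', lt_of_le_of_lt (hmono0a i) hk1,
        lt_of_lt_of_le hk2 (hmono1a i)⟩
    · have hkm : (k : ℝ) < n := lt_of_lt_of_le hk2 (hbI (si i)).2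
      have hkm' : k < n := by exact_mod_cast hkm
      have hk0 : (0 : ℝ) < k := lt_of_le_of_lt (hbI (ii i)).1 hk1
      have hk0' : 0 < k := by exact_mod_cast hk0
      refine ⟨Sum.inr ⟨k, by omega⟩, ?_, hk1, hk2⟩
      apply Finset.inr_mem_disjSum.mpr
      rw [hFQ]
      simp only [Finset.mem_filter, Finset.mem_univ, true_and]
      exact ⟨hk0', hkm', lt_of_le_of_lt (hmono0b i) hk1,
        lt_of_lt_of_le hk2 (hmono1b i)⟩
  choose F hFmem hFcond using key2
  -- F is injective
  have hFinj : Function.Injective F := by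
    have haux : ∀ i i' : Fin (t - 1), (i : ℕ) < (i' : ℕ) → F i ≠ F i' := by
      intro i i' hii' heq
      have hle : a (si i) ≤ a (ii i') := ha.monotone (by simp [hsi, hii, Fin.le_def]; omega)
      have hleb : b (si i) ≤ b (ii i') := hb.monotone (by simp [hsi, hii, Fin.le_def]; omega)
      have h1 := hFcond i
      have h2 := hFcond i'
      rw [heq] at h1
      cases hF : F i' with
      | inl j =>
        rw [hF] at h1 h2
        simp only [Sum.elim_inl] at h1 h2
        linarith [h1.2, h2.1]
      | inr j =>
        rw [hF] at h1 h2
        simp only [Sum.elim_inr] at h1 h2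
        linarith [h1.2, h2.1]
    intro i i' heq
    rcases lt_trichotomy (i : ℕ) (i' : ℕ) with h | h | h
    · exact absurd heq (haux i i' h)
    · exact Fin.ext h
    · exact absurd heq.symm (haux i' i h)
  calc t - 1 = (Finset.univ : Finset (Fin (t - 1))).card := by simp
    _ ≤ (FP.disjSum FQ).card :=
        Finset.card_le_card_of_injOn F (fun i _ => hFmem i) (hFinj.injOn)
    _ = FP.card + FQ.card := Finset.card_disjSum _ _
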